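/- arXiv:2605.21621 — 3 statements merged into one kernel-verified Lean document; each statement's English description precedes it below -/
import Mathlib

section
/- Let μ ∈ (0, 1/4] and p ∈ ℍ². Suppose J : ℍ² → ℝ is a smooth function satisfying −ΔJ = μJ pointwise on all of ℍ², with J(p) = 1, which is radial about p, i.e. there is a function f : [0,∞) → ℝ with J(x) = f(d(x,p)) for all x ∈ ℍ². Then: (i) J(x) > 0 for every x ∈ ℍ²; (ii) f is monotonically decreasing on [0,∞); and (iii) the gradient of J vanishes at p. -/
open MeasureTheory Filter Set Topology

noncomputable section

/-- The upper half-plane model of the hyperbolic plane. -/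
def H2 : Set (ℝ × ℝ) := {p | 0 < p.2}

/-- Inverse hyperbolic cosine. -/
def arcosh (t : ℝ) : ℝ := Real.log (t + Real.sqrt (t ^ 2 - 1))

/-- Hyperbolic distance in the upper half-plane model. -/
def hypDist (a b : ℝ × ℝ) : ℝ :=
  arcosh (1 + ((a.1 - b.1) ^ 2 + (a.2 - b.2) ^ 2) / (2 * a.2 * b.2))

/-- Partial derivative in the `x` direction. -/
def pdx (u : ℝ × ℝ → ℝ) (p : ℝ × ℝ) : ℝ := fderiv ℝ u p (1, 0)

/-- Partial derivative in the `y` direction. -/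
def pdy (u : ℝ × ℝ → ℝ) (p : ℝ × ℝ) : ℝ := fderiv ℝ u p (0, 1)

/-- Squared Euclidean norm of the gradient. -/
def gradSq (u : ℝ × ℝ → ℝ) (p : ℝ × ℝ) : ℝ := pdx u p ^ 2 + pdy u p ^ 2

/-- The hyperbolic Laplacian `Δu = y²(u_xx + u_yy)`. -/
def hypLap (u : ℝ × ℝ → ℝ) (p : ℝ × ℝ) : ℝ :=
  p.2 ^ 2 * (pdx (pdx u) p + pdy (pdy u) p)

/-- Geodesic convexity in the hyperbolic metric. -/
def GeodesicallyConvex (Ω : Set (ℝ × ℝ)) : Prop :=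
  ∀ a ∈ Ω, ∀ b ∈ Ω, ∀ c ∈ H2, hypDist a c + hypDist c b = hypDist a b → c ∈ Ω

/-- `ν` is a Euclidean unit vector, the boundary of `Ω` has a tangent line at `q`
(the line through `q` orthogonal to `ν`), and `ν` points outward from `Ω`. -/
def IsOutwardNormalAt (Ω : Set (ℝ × ℝ)) (q ν : ℝ × ℝ) : Prop :=
  ν.1 ^ 2 + ν.2 ^ 2 = 1 ∧
  Tendsto (fun x : ℝ × ℝ =>
      |(x.1 - q.1) * ν.1 + (x.2 - q.2) * ν.2| /
        Real.sqrt ((x.1 - q.1) ^ 2 + (x.2 - q.2) ^ 2))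
    (𝓝[frontier Ω \ {q}] q) (𝓝 0) ∧
  ∀ᶠ t in 𝓝[>] (0 : ℝ), q + t • ν ∉ Ω

lemma arcosh_nonneg {t : ℝ} (ht : 1 ≤ t) : 0 ≤ arcosh t := by
  have h1 : (1:ℝ) ≤ t + Real.sqrt (t ^ 2 - 1) := le_add_of_le_of_nonneg ht (Real.sqrt_nonneg _)
  simpa [arcosh] using Real.log_nonneg h1

lemma arcosh_cosh {r : ℝ} (hr : 0 ≤ r) : arcosh (Real.cosh r) = r := by
  have h1 : Real.cosh r ^ 2 - 1 = Real.sinh r ^ 2 := by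
    have := Real.cosh_sq r; linarith
  have h2 : Real.sqrt (Real.cosh r ^ 2 - 1) = Real.sinh r := by
    rw [h1, Real.sqrt_sq (Real.sinh_nonneg_iff.2 hr)]
  rw [arcosh, h2, Real.cosh_add_sinh, Real.log_exp]

lemma hasDerivAt_arcosh {t : ℝ} (ht : 1 < t) : HasDerivAt arcosh ((Real.sqrt (t ^ 2 - 1))⁻¹) t := by
  have h0 : (0:ℝ) < t ^ 2 - 1 := by nlinarith
  have hs0 : 0 < Real.sqrt (t ^ 2 - 1) := Real.sqrt_pos.2 h0
  have hsq : HasDerivAt (fun s : ℝ => Real.sqrt (s ^ 2 - 1)) (1 / (2 * Real.sqrt (t ^ 2 - 1)) * (2 * t)) t := by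
    have hin : HasDerivAt (fun s : ℝ => s ^ 2 - 1) (2 * t) t := by
      simpa using ((hasDerivAt_id t).pow 2).sub_const 1
    exact (Real.hasDerivAt_sqrt (ne_of_gt h0)).comp t hin
  have hadd : HasDerivAt (fun s : ℝ => s + Real.sqrt (s ^ 2 - 1))
      (1 + 1 / (2 * Real.sqrt (t ^ 2 - 1)) * (2 * t)) t := (hasDerivAt_id t).add hsq
  have hpos : 0 < t + Real.sqrt (t ^ 2 - 1) := by positivity
  have hlog := (Real.hasDerivAt_log (ne_of_gt hpos)).comp t hadd
  have : arcosh = fun s : ℝ => Real.log (s + Real.sqrt (s ^ 2 - 1)) := rfl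
  rw [this]
  refine (hlog).congr_deriv (Eq.symm ?_)
  have hss : Real.sqrt (t ^ 2 - 1) * Real.sqrt (t ^ 2 - 1) = t ^ 2 - 1 :=
    Real.mul_self_sqrt h0.le
  field_simp
  nlinarith [hss, hs0, hpos]



lemma H2_open : IsOpen H2 := isOpen_Ioi.preimage continuous_snd

lemma one_le_hyp_arg {x q : ℝ × ℝ} (hx : x ∈ H2) (hq : q ∈ H2) :
    (1:ℝ) ≤ 1 + ((x.1 - q.1) ^ 2 + (x.2 - q.2) ^ 2) / (2 * x.2 * q.2) := by
  have h2 : (0:ℝ) < 2 * x.2 * q.2 := by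
    have := hx; have := hq; simp only [H2, Set.mem_setOf_eq] at *; positivity
  have : (0:ℝ) ≤ ((x.1 - q.1) ^ 2 + (x.2 - q.2) ^ 2) / (2 * x.2 * q.2) := by positivity
  linarith

lemma hypDist_nonneg {x q : ℝ × ℝ} (hx : x ∈ H2) (hq : q ∈ H2) : 0 ≤ hypDist x q :=
  arcosh_nonneg (one_le_hyp_arg hx hq)

lemma hypDist_vertical {p : ℝ × ℝ} (hp : p ∈ H2) (r : ℝ) :
    hypDist (p.1, p.2 * Real.exp r) p = |r| := by
  have hb : (0:ℝ) < p.2 := hp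
  have he : (0:ℝ) < Real.exp r := Real.exp_pos r
  have key : 1 + ((p.1 - p.1) ^ 2 + (p.2 * Real.exp r - p.2) ^ 2) /
      (2 * (p.2 * Real.exp r) * p.2) = Real.cosh r := by
    rw [Real.cosh_eq, Real.exp_neg]
    field_simp
    ring
  show arcosh _ = |r|
  rw [key, ← Real.cosh_abs, arcosh_cosh (abs_nonneg r)]

/-- Comparison supersolution `ψ(r) = 1/cosh(r/2)`. -/
def psiC (r : ℝ) : ℝ := (Real.cosh (r / 2))⁻¹

def psiD1 (r : ℝ) : ℝ := -Real.sinh (r / 2) / (2 * Real.cosh (r / 2) ^ 2)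

def psiD2 (r : ℝ) : ℝ := (Real.sinh (r / 2) ^ 2 - 1) / (4 * Real.cosh (r / 2) ^ 3)

lemma psiC_pos (r : ℝ) : 0 < psiC r := by
  have := Real.cosh_pos (x := r / 2); exact inv_pos.2 this

lemma hasDerivAt_half_cosh (r : ℝ) :
    HasDerivAt (fun s : ℝ => Real.cosh (s / 2)) (Real.sinh (r / 2) / 2) r := by
  have h := (Real.hasDerivAt_cosh (r / 2)).comp r ((hasDerivAt_id r).div_const 2)
  exact h.congr_deriv (by ring)

lemma hasDerivAt_psiC (r : ℝ) : HasDerivAt psiC (psiD1 r) r := by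
  have hc : Real.cosh (r / 2) ≠ 0 := (Real.cosh_pos (r / 2)).ne'
  have h := (hasDerivAt_half_cosh r).inv hc
  refine (h).congr_deriv (Eq.symm ?_)
  unfold psiD1
  field_simp

lemma hasDerivAt_psiD1 (r : ℝ) : HasDerivAt psiD1 (psiD2 r) r := by
  have hc : 0 < Real.cosh (r / 2) := Real.cosh_pos _
  have hn : HasDerivAt (fun s : ℝ => -Real.sinh (s / 2)) (-(Real.cosh (r / 2) / 2)) r := by
    have h := (Real.hasDerivAt_sinh (r / 2)).comp r ((hasDerivAt_id r).div_const 2)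
    exact h.neg.congr_deriv (by ring)
  have hd : HasDerivAt (fun s : ℝ => 2 * Real.cosh (s / 2) ^ 2)
      (2 * (2 * Real.cosh (r / 2) * (Real.sinh (r / 2) / 2))) r := by
    have h := ((hasDerivAt_half_cosh r).pow 2).const_mul 2
    refine (h).congr_deriv (Eq.symm ?_)
    ring
  have hdne : 2 * Real.cosh (r / 2) ^ 2 ≠ 0 := by positivity
  have h := hn.div hd hdne
  have : psiD1 = fun s : ℝ => -Real.sinh (s / 2) / (2 * Real.cosh (s / 2) ^ 2) := rfl
  rw [this]
  refine (h).congr_deriv (Eq.symm ?_)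
  unfold psiD2
  have hsq : Real.cosh (r / 2) ^ 2 = Real.sinh (r / 2) ^ 2 + 1 := Real.cosh_sq _
  field_simp
  nlinarith [hsq, hc]

lemma beta_pos {μ r : ℝ} (hμle : μ ≤ 1 / 4) (hr : 0 < r) :
    0 < -(Real.cosh r * psiD1 r + Real.sinh r * psiD2 r + μ * Real.sinh r * psiC r) := by
  have hss : 0 < Real.sinh (r / 2) := Real.sinh_pos_iff.2 (by positivity)
  have hcs : 0 < Real.cosh (r / 2) := Real.cosh_pos _
  have hr2 : r = 2 * (r / 2) := by ring
  have hch : Real.cosh r = 2 * Real.cosh (r / 2) ^ 2 - 1 := by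
    have h := Real.cosh_two_mul (r / 2); rw [show 2 * (r / 2) = r by ring] at h
    have hsq := Real.cosh_sq (r / 2); linarith
  have hsh : Real.sinh r = 2 * Real.sinh (r / 2) * Real.cosh (r / 2) := by
    have h := Real.sinh_two_mul (r / 2); rw [show 2 * (r / 2) = r by ring] at h; exact h
  have hsq : Real.cosh (r / 2) ^ 2 = Real.sinh (r / 2) ^ 2 + 1 := Real.cosh_sq _
  rw [hch, hsh]
  unfold psiD1 psiD2 psiC
  have key : -((2 * Real.cosh (r / 2) ^ 2 - 1) * (-Real.sinh (r / 2) / (2 * Real.cosh (r / 2) ^ 2)) +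
      2 * Real.sinh (r / 2) * Real.cosh (r / 2) *
        ((Real.sinh (r / 2) ^ 2 - 1) / (4 * Real.cosh (r / 2) ^ 3)) +
      μ * (2 * Real.sinh (r / 2) * Real.cosh (r / 2)) * (Real.cosh (r / 2))⁻¹) =
      Real.sinh (r / 2) * ((Real.cosh (r / 2) ^ 2 + 1) / (2 * Real.cosh (r / 2) ^ 2) - 2 * μ) := by
    field_simp
    linear_combination 4 * hsq
  rw [key]
  have h4 : (1:ℝ) / 2 < (Real.cosh (r / 2) ^ 2 + 1) / (2 * Real.cosh (r / 2) ^ 2) := by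
    rw [div_lt_div_iff₀ (by norm_num) (by positivity)]
    nlinarith
  exact mul_pos hss (by linarith)

lemma continuous_psiC : Continuous psiC :=
  (Real.continuous_cosh.comp (continuous_id.div_const 2)).inv₀ fun s => (Real.cosh_pos _).ne'

lemma continuous_psiD1 : Continuous psiD1 := by
  apply Continuous.div
  · exact (Real.continuous_sinh.comp (continuous_id.div_const 2)).neg
  · exact continuous_const.mul ((Real.continuous_cosh.comp (continuous_id.div_const 2)).pow 2)
  · intro s; positivity

lemma ode_analysis (μ : ℝ) (hμpos : 0 < μ) (hμle : μ ≤ 1 / 4) (F : ℝ → ℝ)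
    (hF : ContDiff ℝ (⊤ : ℕ∞) F) (hF0 : F 0 = 1)
    (hODE : ∀ r, 0 < r →
      deriv (deriv F) r = -(Real.cosh r / Real.sinh r) * deriv F r - μ * F r) :
    (∀ r, 0 ≤ r → 0 < F r) ∧ (∀ r, 0 < r → deriv F r < 0) := by
  have hFd : Differentiable ℝ F := hF.differentiable (by simp)
  have hF1 : ContDiff ℝ ((⊤ : ℕ∞) : WithTop ℕ∞) (deriv F) := (contDiff_infty_iff_deriv.mp hF).2
  have hFd1 : Differentiable ℝ (deriv F) := hF1.differentiable (by simp)
  have hFc : Continuous F := hFd.continuous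
  have hF1c : Continuous (deriv F) := hFd1.continuous
  have hder : ∀ s, HasDerivAt F (deriv F s) s := fun s => (hFd s).hasDerivAt
  have hder2 : ∀ s, HasDerivAt (deriv F) (deriv (deriv F) s) s := fun s => (hFd1 s).hasDerivAt
  set W : ℝ → ℝ := fun s => Real.sinh s * (deriv F s * psiC s - psiD1 s * F s) with hWdef
  have hW : ∀ s, 0 < s → HasDerivAt W
      (F s * (-(Real.cosh s * psiD1 s + Real.sinh s * psiD2 s + μ * Real.sinh s * psiC s))) s := by
    intro s hs
    have hsinh : Real.sinh s ≠ 0 := (Real.sinh_pos_iff.2 hs).ne'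
    have hinner : HasDerivAt (fun t => deriv F t * psiC t - psiD1 t * F t)
        ((deriv (deriv F) s * psiC s + deriv F s * psiD1 s) -
          (psiD2 s * F s + psiD1 s * deriv F s)) s :=
      ((hder2 s).mul (hasDerivAt_psiC s)).sub ((hasDerivAt_psiD1 s).mul (hder s))
    have h := (Real.hasDerivAt_sinh s).mul hinner
    refine (h).congr_deriv (Eq.symm ?_)
    rw [hODE s hs]
    field_simp
    ring
  have hWc : Continuous W :=
    Real.continuous_sinh.mul ((hF1c.mul continuous_psiC).sub (continuous_psiD1.mul hFc))
  have hpos : ∀ r, 0 ≤ r → 0 < F r := by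
    by_contra hcon
    push_neg at hcon
    obtain ⟨r₁, hr₁0, hr₁⟩ := hcon
    set S : Set ℝ := {s | 0 ≤ s ∧ F s ≤ 0} with hSdef
    have hSne : S.Nonempty := ⟨r₁, hr₁0, hr₁⟩
    have hSbdd : BddBelow S := ⟨0, fun s hs => hs.1⟩
    have hSclosed : IsClosed S := by
      have : S = {s : ℝ | 0 ≤ s} ∩ {s : ℝ | F s ≤ 0} := rfl
      rw [this]
      exact (isClosed_le continuous_const continuous_id).inter
        (isClosed_le hFc continuous_const)
    set r₀ := sInf S with hr₀def
    have hr₀S : r₀ ∈ S := hSclosed.csInf_mem hSne hSbdd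
    have hr₀nonneg : 0 ≤ r₀ := hr₀S.1
    have hr₀pos : 0 < r₀ := by
      rcases eq_or_lt_of_le hr₀nonneg with h | h
      · exfalso
        have h2 := hr₀S.2
        rw [← h, hF0] at h2
        linarith
      · exact h
    have hbefore : ∀ s, 0 ≤ s → s < r₀ → 0 < F s := by
      intro s h0 hs
      by_contra hle
      push_neg at hle
      exact absurd (csInf_le hSbdd ⟨h0, hle⟩) (not_le.2 hs)
    have hFr₀ : F r₀ = 0 := by
      refine le_antisymm hr₀S.2 ?_
      have hcl : r₀ ∈ closure (Ico 0 r₀) := by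
        rw [closure_Ico hr₀pos.ne]
        exact ⟨hr₀nonneg, le_refl _⟩
      have hne : (𝓝[Ico 0 r₀] r₀).NeBot := mem_closure_iff_nhdsWithin_neBot.mp hcl
      exact ge_of_tendsto (hFc.continuousWithinAt : ContinuousWithinAt F (Ico 0 r₀) r₀)
        (eventually_mem_nhdsWithin.mono fun s hs => (hbefore s hs.1 hs.2).le)
    have hF'r₀ : deriv F r₀ ≤ 0 := by
      by_contra hpos'
      push_neg at hpos'
      have hslope := hasDerivAt_iff_tendsto_slope.mp (hder r₀)
      have hev0 : ∀ᶠ x in 𝓝 (deriv F r₀), 0 < x := eventually_gt_nhds hpos'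
      have hle : 𝓝[<] r₀ ≤ 𝓝[≠] r₀ := nhdsWithin_mono r₀ fun s hs => ne_of_lt hs
      have hev1 : ∀ᶠ s in 𝓝[<] r₀, 0 < slope F r₀ s :=
        (hslope.eventually hev0).filter_mono hle
      have hev2 : ∀ᶠ s in 𝓝[<] r₀, s ∈ Ioo 0 r₀ :=
        Ioo_mem_nhdsLT_of_mem ⟨hr₀pos, le_refl r₀⟩
      obtain ⟨s, h1, h2⟩ := (hev1.and hev2).exists
      have hFs : 0 < F s := hbefore s h2.1.le h2.2
      have : slope F r₀ s < 0 := by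
        rw [slope_def_field]
        rw [hFr₀]
        apply div_neg_of_pos_of_neg
        · linarith
        · linarith [h2.2]
      linarith
    have hWmono : StrictMonoOn W (Icc 0 r₀) := by
      apply strictMonoOn_of_deriv_pos (convex_Icc 0 r₀) hWc.continuousOn
      intro s hs
      rw [interior_Icc] at hs
      rw [(hW s hs.1).deriv]
      exact mul_pos (hbefore s hs.1.le hs.2) (beta_pos hμle hs.1)
    have hW0 : W 0 = 0 := by simp [hWdef]
    have hWr₀pos : 0 < W r₀ := by
      have h := hWmono (left_mem_Icc.2 hr₀pos.le) (right_mem_Icc.2 hr₀pos.le) hr₀pos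
      rwa [hW0] at h
    have hWr₀nonpos : W r₀ ≤ 0 := by
      have hWe : W r₀ = Real.sinh r₀ * (deriv F r₀ * psiC r₀) := by
        simp [hWdef, hFr₀]
      rw [hWe]
      have h1 : 0 < Real.sinh r₀ := Real.sinh_pos_iff.2 hr₀pos
      have h2 := psiC_pos r₀
      have h3 : deriv F r₀ * psiC r₀ ≤ 0 := by nlinarith
      exact mul_nonpos_of_nonneg_of_nonpos h1.le h3
    linarith
  have hmono : ∀ r, 0 < r → deriv F r < 0 := by
    set G : ℝ → ℝ := fun s => Real.sinh s * deriv F s with hGdef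
    have hGc : Continuous G := Real.continuous_sinh.mul hF1c
    have hG : ∀ s, 0 < s → HasDerivAt G (-(μ * Real.sinh s * F s)) s := by
      intro s hs
      have hsinh : Real.sinh s ≠ 0 := (Real.sinh_pos_iff.2 hs).ne'
      have h := (Real.hasDerivAt_sinh s).mul (hder2 s)
      refine (h).congr_deriv (Eq.symm ?_)
      rw [hODE s hs]
      field_simp
      ring
    have hGanti : StrictAntiOn G (Ici 0) := by
      apply strictAntiOn_of_deriv_neg (convex_Ici 0) hGc.continuousOn
      intro s hs
      rw [interior_Ici] at hs
      rw [(hG s hs).deriv]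
      have h1 : 0 < Real.sinh s := Real.sinh_pos_iff.2 hs
      have h2 := hpos s hs.le
      nlinarith [mul_pos (mul_pos hμpos h1) h2]
    intro r hr
    have h := hGanti (self_mem_Ici) (mem_Ici.2 hr.le) hr
    have hG0 : G 0 = 0 := by simp [hGdef]
    rw [hG0] at h
    have h1 : 0 < Real.sinh r := Real.sinh_pos_iff.2 hr
    by_contra hge
    push_neg at hge
    have : 0 ≤ Real.sinh r * deriv F r := mul_nonneg h1.le hge
    have hGr : G r = Real.sinh r * deriv F r := rfl
    rw [hGr] at h
    linarith
  exact ⟨hpos, hmono⟩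


lemma hasDerivAt_pdx (g : ℝ × ℝ → ℝ) (q : ℝ × ℝ) (hg : DifferentiableAt ℝ g q) :
    HasDerivAt (fun x => g (x, q.2)) (pdx g q) q.1 := by
  have hc : HasDerivAt (fun x : ℝ => ((x, q.2) : ℝ × ℝ)) ((1 : ℝ), (0 : ℝ)) q.1 :=
    (hasDerivAt_id q.1).prodMk (hasDerivAt_const q.1 q.2)
  have h := hg.hasFDerivAt.comp_hasDerivAt q.1 hc
  exact h

lemma hasDerivAt_pdy (g : ℝ × ℝ → ℝ) (q : ℝ × ℝ) (hg : DifferentiableAt ℝ g q) :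
    HasDerivAt (fun y => g (q.1, y)) (pdy g q) q.2 := by
  have hc : HasDerivAt (fun y : ℝ => ((q.1, y) : ℝ × ℝ)) ((0 : ℝ), (1 : ℝ)) q.2 :=
    (hasDerivAt_const q.2 q.1).prodMk (hasDerivAt_id q.2)
  have h := hg.hasFDerivAt.comp_hasDerivAt q.2 hc
  exact h



/-- **Lemma (radial eigenfunctions with small eigenvalue).** If `μ ∈ (0, 1/4]` and
`J : ℍ² → ℝ` is a smooth solution of `−ΔJ = μJ` on all of `ℍ²` with `J(p) = 1`, radial
about `p` (i.e. `J(x) = f(d(x,p))`), then `J > 0` everywhere, `f` is monotonically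
decreasing on `[0,∞)`, and the gradient of `J` vanishes at `p`. -/
theorem radial_eigenfunction_positive_decreasing
    (μ : ℝ) (hμpos : 0 < μ) (hμle : μ ≤ 1 / 4)
    (p : ℝ × ℝ) (hp : p ∈ H2)
    (J : ℝ × ℝ → ℝ) (hJsmooth : ContDiffOn ℝ (⊤ : ℕ∞) J H2)
    (heigen : ∀ x ∈ H2, -hypLap J x = μ * J x)
    (hJp : J p = 1)
    (f : ℝ → ℝ) (hradial : ∀ x ∈ H2, J x = f (hypDist x p)) :
    (∀ x ∈ H2, 0 < J x) ∧ AntitoneOn f (Set.Ici 0) ∧ fderiv ℝ J p = 0 := by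
  have hb : (0 : ℝ) < p.2 := hp
  have hH2open : IsOpen H2 := H2_open
  have hJdiff : ∀ x ∈ H2, DifferentiableAt ℝ J x := fun x hx =>
    (hJsmooth.differentiableOn (by simp)).differentiableAt (hH2open.mem_nhds hx)
  -- the radial profile along the vertical geodesic
  set F : ℝ → ℝ := fun r => J (p.1, p.2 * Real.exp r) with hFdef
  have hmem : ∀ r : ℝ, ((p.1, p.2 * Real.exp r) : ℝ × ℝ) ∈ H2 := fun r => by
    show (0 : ℝ) < p.2 * Real.exp r
    positivity
  have hcurve : ContDiff ℝ (⊤ : ℕ∞) (fun r : ℝ => ((p.1, p.2 * Real.exp r) : ℝ × ℝ)) :=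
    contDiff_const.prodMk (contDiff_const.mul Real.contDiff_exp)
  have hFsm : ContDiff ℝ (⊤ : ℕ∞) F := by
    rw [← contDiffOn_univ]
    exact hJsmooth.comp hcurve.contDiffOn fun r _ => hmem r
  have hFcast : ContDiff ℝ (⊤ : ℕ∞) F := hFsm.of_le (by simp)
  have hFd : Differentiable ℝ F := hFcast.differentiable (by simp)
  have hF1 : ContDiff ℝ ((⊤ : ℕ∞) : WithTop ℕ∞) (deriv F) := (contDiff_infty_iff_deriv.mp hFcast).2
  have hFd1 : Differentiable ℝ (deriv F) := hF1.differentiable (by simp)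
  have hFc : Continuous F := hFd.continuous
  have hder : ∀ s, HasDerivAt F (deriv F s) s := fun s => (hFd s).hasDerivAt
  have hder2 : ∀ s, HasDerivAt (deriv F) (deriv (deriv F) s) s := fun s => (hFd1 s).hasDerivAt
  have hFf : ∀ r : ℝ, F r = f |r| := fun r => by
    show J (p.1, p.2 * Real.exp r) = f |r|
    rw [hradial _ (hmem r), hypDist_vertical hp r]
  have hF0 : F 0 = 1 := by
    show J (p.1, p.2 * Real.exp 0) = 1
    have h : p.2 * Real.exp 0 = p.2 := by simp
    rw [h]
    exact hJp
  -- values of J on the vertical line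
  set L : ℝ → ℝ := fun y => Real.log y - Real.log p.2 with hLdef
  have hJa : ∀ y : ℝ, 0 < y → J (p.1, y) = F (L y) := by
    intro y hy
    show J (p.1, y) = J (p.1, p.2 * Real.exp (Real.log y - Real.log p.2))
    have h : p.2 * Real.exp (Real.log y - Real.log p.2) = y := by
      rw [Real.exp_sub, Real.exp_log hy, Real.exp_log hb]
      field_simp
    rw [h]
  have hLd : ∀ y : ℝ, 0 < y → HasDerivAt L y⁻¹ y := fun y hy => by
    exact (Real.hasDerivAt_log hy.ne').sub_const (Real.log p.2)
  -- smoothness of the partial derivatives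
  have hfderivJ : ContDiffOn ℝ (⊤ : ℕ∞) (fderiv ℝ J) H2 := hJsmooth.fderiv_of_isOpen hH2open (by simp)
  have hpdxJ : ContDiffOn ℝ (⊤ : ℕ∞) (pdx J) H2 := hfderivJ.clm_apply contDiffOn_const
  have hpdyJ : ContDiffOn ℝ (⊤ : ℕ∞) (pdy J) H2 := hfderivJ.clm_apply contDiffOn_const
  have hpdxJdiff : ∀ x ∈ H2, DifferentiableAt ℝ (pdx J) x := fun x hx =>
    (hpdxJ.differentiableOn (by simp)).differentiableAt (hH2open.mem_nhds hx)
  have hpdyJdiff : ∀ x ∈ H2, DifferentiableAt ℝ (pdy J) x := fun x hx =>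
    (hpdyJ.differentiableOn (by simp)).differentiableAt (hH2open.mem_nhds hx)
  -- pdy J along the vertical line
  have hpdyJ_line : ∀ y : ℝ, 0 < y → pdy J (p.1, y) = deriv F (L y) * y⁻¹ := by
    intro y hy
    have h1 : HasDerivAt (fun t => J (p.1, t)) (pdy J (p.1, y)) y :=
      hasDerivAt_pdy J (p.1, y) (hJdiff _ hy)
    have h2 : HasDerivAt (fun t => F (L t)) (deriv F (L y) * y⁻¹) y :=
      (hder (L y)).comp y (hLd y hy)
    have heq : (fun t => J (p.1, t)) =ᶠ[𝓝 y] fun t => F (L t) := by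
      filter_upwards [Ioi_mem_nhds hy] with t ht
      exact hJa t ht
    exact h1.unique (h2.congr_of_eventuallyEq heq)
  -- the radial ODE
  have hODE : ∀ r, 0 < r →
      deriv (deriv F) r = -(Real.cosh r / Real.sinh r) * deriv F r - μ * F r := by
    intro r hr
    have hsinhr : 0 < Real.sinh r := Real.sinh_pos_iff.2 hr
    set y₀ : ℝ := p.2 * Real.exp r with hy₀def
    have hy₀ : 0 < y₀ := by rw [hy₀def]; positivity
    have hq : ((p.1, y₀) : ℝ × ℝ) ∈ H2 := hy₀
    have hexp1 : (1 : ℝ) < Real.exp r := by nlinarith [Real.add_one_le_exp r]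
    have hyb : p.2 < y₀ := by
      rw [hy₀def]
      nth_rewrite 1 [← mul_one p.2]
      exact mul_lt_mul_of_pos_left hexp1 hb
    have hLy₀ : L y₀ = r := by
      show Real.log y₀ - Real.log p.2 = r
      rw [hy₀def, Real.log_mul hb.ne' (Real.exp_pos r).ne', Real.log_exp]
      ring
    -- second y-derivative of J at (p.1, y₀)
    have hJyy : pdy (pdy J) (p.1, y₀) =
        deriv (deriv F) r * y₀⁻¹ * y₀⁻¹ + deriv F r * -(y₀ ^ 2)⁻¹ := by
      have h1 : HasDerivAt (fun t => pdy J (p.1, t)) (pdy (pdy J) (p.1, y₀)) y₀ :=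
        hasDerivAt_pdy (pdy J) (p.1, y₀) (hpdyJdiff _ hq)
      have h2 : HasDerivAt (fun t => deriv F (L t) * t⁻¹)
          (deriv (deriv F) (L y₀) * y₀⁻¹ * y₀⁻¹ + deriv F (L y₀) * -(y₀ ^ 2)⁻¹) y₀ :=
        ((hder2 (L y₀)).comp y₀ (hLd y₀ hy₀)).mul (hasDerivAt_inv hy₀.ne')
      have heq : (fun t => pdy J (p.1, t)) =ᶠ[𝓝 y₀] fun t => deriv F (L t) * t⁻¹ := by
        filter_upwards [Ioi_mem_nhds hy₀] with t ht
        exact hpdyJ_line t ht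
      have h3 := h1.unique (h2.congr_of_eventuallyEq heq)
      rw [h3, hLy₀]
    -- second x-derivative of J at (p.1, y₀)
    set c : ℝ → ℝ := fun x => 1 + ((x - p.1) ^ 2 + (y₀ - p.2) ^ 2) / (2 * y₀ * p.2) with hcdef
    have hc1 : ∀ x, 1 < c x := by
      intro x
      show (1 : ℝ) < 1 + ((x - p.1) ^ 2 + (y₀ - p.2) ^ 2) / (2 * y₀ * p.2)
      have hy0 : (0 : ℝ) < (y₀ - p.2) ^ 2 := by
        have : y₀ - p.2 ≠ 0 := sub_ne_zero.2 hyb.ne'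
        positivity
      have h2 : 0 < ((x - p.1) ^ 2 + (y₀ - p.2) ^ 2) / (2 * y₀ * p.2) := by
        apply div_pos (by nlinarith [sq_nonneg (x - p.1)]) (by positivity)
      linarith
    have hcd : ∀ x, HasDerivAt c ((x - p.1) / (y₀ * p.2)) x := by
      intro x
      have h : HasDerivAt (fun s : ℝ => (s - p.1) ^ 2) (2 * (x - p.1)) x := by
        exact (((hasDerivAt_id x).sub_const p.1).pow 2).congr_deriv (by simp)
      have h2 := ((h.add_const ((y₀ - p.2) ^ 2)).div_const (2 * y₀ * p.2)).const_add 1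
      refine (h2).congr_deriv (Eq.symm ?_)
      field_simp
    have hcar : c p.1 = Real.cosh r := by
      show 1 + ((p.1 - p.1) ^ 2 + (y₀ - p.2) ^ 2) / (2 * y₀ * p.2) = Real.cosh r
      rw [hy₀def, Real.cosh_eq, Real.exp_neg]
      have he := (Real.exp_pos r).ne'
      field_simp
      ring
    have hJline : ∀ x : ℝ, J (x, y₀) = F (arcosh (c x)) := by
      intro x
      have hx2 : ((x, y₀) : ℝ × ℝ) ∈ H2 := hy₀
      have hdist : hypDist (x, y₀) p = arcosh (c x) := rfl
      rw [hradial _ hx2, hdist, hFf (arcosh (c x)),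
        abs_of_nonneg (arcosh_nonneg (hc1 x).le)]
    have hUderiv : ∀ x : ℝ, pdx J (x, y₀) =
        (deriv F (arcosh (c x)) * (Real.sqrt ((c x) ^ 2 - 1))⁻¹) * ((x - p.1) / (y₀ * p.2)) := by
      intro x
      have h1 : HasDerivAt (fun s => J (s, y₀)) (pdx J (x, y₀)) x :=
        hasDerivAt_pdx J (x, y₀) (hJdiff _ hy₀)
      have harc : HasDerivAt (fun s => arcosh (c s))
          ((Real.sqrt ((c x) ^ 2 - 1))⁻¹ * ((x - p.1) / (y₀ * p.2))) x :=
        (hasDerivAt_arcosh (hc1 x)).comp x (hcd x)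
      have h2 : HasDerivAt (fun s => F (arcosh (c s)))
          (deriv F (arcosh (c x)) * ((Real.sqrt ((c x) ^ 2 - 1))⁻¹ * ((x - p.1) / (y₀ * p.2)))) x :=
        (hder _).comp x harc
      have heq : (fun s => J (s, y₀)) = fun s => F (arcosh (c s)) := funext hJline
      rw [heq] at h1
      rw [h1.unique h2]
      ring
    have hcs : Real.cosh r ^ 2 - 1 = Real.sinh r ^ 2 := by
      have := Real.cosh_sq r
      linarith
    have hJxx : pdx (pdx J) (p.1, y₀) = deriv F r * (Real.sinh r)⁻¹ * (y₀ * p.2)⁻¹ := by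
      have h1 : HasDerivAt (fun x => pdx J (x, y₀)) (pdx (pdx J) (p.1, y₀)) p.1 :=
        hasDerivAt_pdx (pdx J) (p.1, y₀) (hpdxJdiff _ hq)
      set U : ℝ → ℝ := fun x => deriv F (arcosh (c x)) * (Real.sqrt ((c x) ^ 2 - 1))⁻¹ with hUdef
      have h0 : (0 : ℝ) < (c p.1) ^ 2 - 1 := by nlinarith [hc1 p.1]
      have hUdiff : DifferentiableAt ℝ U p.1 := by
        apply DifferentiableAt.mul
        · exact (hFd1 _).comp p.1
            ((hasDerivAt_arcosh (hc1 p.1)).comp p.1 (hcd p.1)).differentiableAt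
        · have hsq : HasDerivAt (fun x => Real.sqrt ((c x) ^ 2 - 1))
              (1 / (2 * Real.sqrt ((c p.1) ^ 2 - 1)) *
                (2 * c p.1 ^ 1 * ((p.1 - p.1) / (y₀ * p.2)))) p.1 :=
            (Real.hasDerivAt_sqrt h0.ne').comp p.1 (((hcd p.1).pow 2).sub_const 1)
          exact hsq.differentiableAt.inv (Real.sqrt_pos.2 h0).ne'
      have hV : HasDerivAt (fun x : ℝ => (x - p.1) / (y₀ * p.2)) ((y₀ * p.2)⁻¹) p.1 := by
        simpa [one_div] using ((hasDerivAt_id p.1).sub_const p.1).div_const (y₀ * p.2)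
      have hprod : HasDerivAt (fun x => U x * ((x - p.1) / (y₀ * p.2)))
          (deriv U p.1 * ((p.1 - p.1) / (y₀ * p.2)) + U p.1 * (y₀ * p.2)⁻¹) p.1 :=
        hUdiff.hasDerivAt.mul hV
      have heq : (fun x => pdx J (x, y₀)) = fun x => U x * ((x - p.1) / (y₀ * p.2)) :=
        funext fun x => hUderiv x
      rw [heq] at h1
      rw [h1.unique hprod]
      have hUa : U p.1 = deriv F r * (Real.sinh r)⁻¹ := by
        show deriv F (arcosh (c p.1)) * (Real.sqrt ((c p.1) ^ 2 - 1))⁻¹ =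
          deriv F r * (Real.sinh r)⁻¹
        rw [hcar, arcosh_cosh hr.le, hcs, Real.sqrt_sq hsinhr.le]
      rw [hUa]
      simp [sub_self]
    -- assemble the ODE from the eigenvalue equation
    have hE := heigen (p.1, y₀) hq
    rw [show hypLap J (p.1, y₀) =
      y₀ ^ 2 * (pdx (pdx J) (p.1, y₀) + pdy (pdy J) (p.1, y₀)) from rfl] at hE
    rw [hJxx, hJyy, hJa y₀ hy₀, hLy₀, mul_add] at hE
    have hbne := hb.ne'
    have hy₀ne := hy₀.ne'
    have hsne := hsinhr.ne'
    have hy2 : y₀ ^ 2 * (deriv F r * (Real.sinh r)⁻¹ * (y₀ * p.2)⁻¹) =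
        deriv F r * (Real.cosh r + Real.sinh r) / Real.sinh r := by
      rw [Real.cosh_add_sinh]
      rw [hy₀def]
      have he := (Real.exp_pos r).ne'
      field_simp
    have hy3 : y₀ ^ 2 * (deriv (deriv F) r * y₀⁻¹ * y₀⁻¹ + deriv F r * -(y₀ ^ 2)⁻¹) =
        deriv (deriv F) r - deriv F r := by
      field_simp
      ring
    rw [hy3] at hE
    rw [hy2] at hE
    field_simp at hE ⊢
    linarith [hE]
  -- apply the ODE analysis
  obtain ⟨hFpos, hFneg⟩ := ode_analysis μ hμpos hμle F hFcast hF0 hODE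
  have hf_eq : ∀ s : ℝ, 0 ≤ s → f s = F s := fun s hs => by
    rw [hFf s, abs_of_nonneg hs]
  refine ⟨?_, ?_, ?_⟩
  · -- positivity
    intro x hx
    have hd0 := hypDist_nonneg hx hp
    rw [hradial x hx, hf_eq _ hd0]
    exact hFpos _ hd0
  · -- monotonicity
    have hFanti : AntitoneOn F (Ici 0) := by
      apply antitoneOn_of_deriv_nonpos (convex_Ici 0) hFc.continuousOn
      · intro s hs
        exact (hFd s).differentiableWithinAt
      · intro s hs
        rw [interior_Ici] at hs
        exact (hFneg s hs).le
    intro s hs t ht hst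
    rw [hf_eq s hs, hf_eq t ht]
    exact hFanti hs ht hst
  · -- vanishing gradient
    have hJdiffp : DifferentiableAt ℝ J p := hJdiff p hp
    -- x-derivative vanishes by reflection symmetry
    have hsym : (fun x => J (x, p.2)) = fun x => J (2 * p.1 - x, p.2) := by
      funext x
      have hx2 : ((x, p.2) : ℝ × ℝ) ∈ H2 := hb
      have hx2' : ((2 * p.1 - x, p.2) : ℝ × ℝ) ∈ H2 := hb
      rw [hradial _ hx2, hradial _ hx2']
      have : hypDist (x, p.2) p = hypDist (2 * p.1 - x, p.2) p := by
        show arcosh (1 + ((x - p.1) ^ 2 + (p.2 - p.2) ^ 2) / (2 * p.2 * p.2)) =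
          arcosh (1 + ((2 * p.1 - x - p.1) ^ 2 + (p.2 - p.2) ^ 2) / (2 * p.2 * p.2))
        congr 2
        ring
      rw [this]
    have hdx : HasDerivAt (fun x => J (x, p.2)) (pdx J p) p.1 := hasDerivAt_pdx J p hJdiffp
    have hdx2 : HasDerivAt (fun x => J (x, p.2)) (pdx J p * (-1)) p.1 := by
      have hneg : HasDerivAt (fun x : ℝ => 2 * p.1 - x) (-1) p.1 := by
        simpa using (hasDerivAt_id p.1).const_sub (2 * p.1)
      have hdx' : HasDerivAt (fun x => J (x, p.2)) (pdx J p) (2 * p.1 - p.1) := by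
        rw [show 2 * p.1 - p.1 = p.1 by ring]
        exact hdx
      have h := hdx'.comp p.1 hneg
      rw [show ((fun x => J (x, p.2)) ∘ fun x : ℝ => 2 * p.1 - x) =
        fun x => J (2 * p.1 - x, p.2) from rfl] at h
      rw [← hsym] at h
      exact h
    have hpdx0 : pdx J p = 0 := by
      have := hdx.unique hdx2
      linarith
    -- y-derivative vanishes since F is even
    have hFeven : (fun s => F (-s)) = F := by
      funext s
      rw [hFf s, hFf (-s), abs_neg]
    have hF'0 : deriv F 0 = 0 := by
      have h1 : HasDerivAt F (deriv F 0) 0 := hder 0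
      have hneg : HasDerivAt (fun s : ℝ => -s) (-1) (0 : ℝ) := by
        exact (hasDerivAt_id (0 : ℝ)).neg
      have h0 : HasDerivAt F (deriv F 0) (-(0 : ℝ)) := by rw [neg_zero]; exact h1
      have h2 := h0.comp (0 : ℝ) hneg
      rw [show (F ∘ fun s : ℝ => -s) = fun s => F (-s) from rfl, hFeven] at h2
      have := h1.unique h2
      linarith
    have hdy : HasDerivAt (fun y => J (p.1, y)) (pdy J p) p.2 := hasDerivAt_pdy J p hJdiffp
    have hdy2 : HasDerivAt (fun y => J (p.1, y)) (0 : ℝ) p.2 := by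
      have h2 : HasDerivAt (fun y => F (L y)) (deriv F (L p.2) * p.2⁻¹) p.2 :=
        (hder (L p.2)).comp p.2 (hLd p.2 hb)
      have hL2 : L p.2 = 0 := by
        show Real.log p.2 - Real.log p.2 = 0
        ring
      rw [hL2, hF'0, zero_mul] at h2
      have heq : (fun y => J (p.1, y)) =ᶠ[𝓝 p.2] fun y => F (L y) := by
        filter_upwards [Ioi_mem_nhds hb] with t ht
        exact hJa t ht
      exact h2.congr_of_eventuallyEq heq
    have hpdy0 : pdy J p = 0 := hdy.unique hdy2
    apply ContinuousLinearMap.ext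
    intro v
    have hv : v = v.1 • ((1 : ℝ), (0 : ℝ)) + v.2 • ((0 : ℝ), (1 : ℝ)) := by
      ext <;> simp
    have h1 : fderiv ℝ J p (1, 0) = 0 := hpdx0
    have h2 : fderiv ℝ J p (0, 1) = 0 := hpdy0
    rw [hv, (fderiv ℝ J p).map_add, (fderiv ℝ J p).map_smul, (fderiv ℝ J p).map_smul, h1, h2]
    simp
end
end

section
/- Let Ω ⊆ ℍ² be an open geodesically convex set, let p ∈ Ω, and let q ∈ ∂Ω ∩ ℍ². Let G be a complete hyperbolic geodesic through q (i.e., a vertical Euclidean half-line or a Euclidean semicircle centered on the x-axis) such that Ω is contained in one of the two connected components H of ℍ² \ G, and let ν be the Euclidean unit normal to G at q pointing away from H. Then the one-sided directional derivative at q of the function x ↦ d(x,p) in the direction ν exists and is strictly positive. Consequently, if J : ℍ² → ℝ is radial about p with J(x) = f(d(x,p)) for a C¹ strictly decreasing function f with f' < 0 on (0,∞), then the directional derivative of J at q in the direction ν is strictly negative. -/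
open MeasureTheory Filter Set Topology

noncomputable section

/-- `G` is a complete hyperbolic geodesic in the upper half-plane (a vertical Euclidean
half-line or a Euclidean semicircle centered on the `x`-axis), and `H` is one of the two
connected components of `ℍ² \ G`. -/
def IsGeodesicWithSide (G H : Set (ℝ × ℝ)) : Prop :=
  (∃ a : ℝ, G = {p : ℝ × ℝ | 0 < p.2 ∧ p.1 = a} ∧
    (H = {p : ℝ × ℝ | 0 < p.2 ∧ p.1 < a} ∨ H = {p : ℝ × ℝ | 0 < p.2 ∧ a < p.1})) ∨
  (∃ c r : ℝ, 0 < r ∧ G = {p : ℝ × ℝ | 0 < p.2 ∧ (p.1 - c) ^ 2 + p.2 ^ 2 = r ^ 2} ∧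
    (H = {p : ℝ × ℝ | 0 < p.2 ∧ (p.1 - c) ^ 2 + p.2 ^ 2 < r ^ 2} ∨
     H = {p : ℝ × ℝ | 0 < p.2 ∧ r ^ 2 < (p.1 - c) ^ 2 + p.2 ^ 2})) 

/-- `ν` is a Euclidean unit vector normal to the curve `G` at `q ∈ G` (i.e. the line
through `q` orthogonal to `ν` is tangent to `G` at `q`) pointing away from the region `H`. -/
def IsUnitNormalAwayFrom (G H : Set (ℝ × ℝ)) (q ν : ℝ × ℝ) : Prop :=
  ν.1 ^ 2 + ν.2 ^ 2 = 1 ∧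
  Tendsto (fun x : ℝ × ℝ =>
      |(x.1 - q.1) * ν.1 + (x.2 - q.2) * ν.2| /
        Real.sqrt ((x.1 - q.1) ^ 2 + (x.2 - q.2) ^ 2))
    (𝓝[G \ {q}] q) (𝓝 0) ∧
  ∀ᶠ t in 𝓝[>] (0 : ℝ), q + t • ν ∉ closure H

/-!
Since `cosh d(x, p) = 1 + |x - p|² / (2 x₂ p₂)` is smooth off the diagonal and `arcosh` is
increasing, the one-sided derivative exists and has the sign of the derivative of
`cosh d(·, p)` at `q` in the direction `ν`. Write the geodesic as `G = {φ = 0}` with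
`φ x = x₁ - a` or `φ x = (x₁ - c)² + x₂² - r²`. Tangency makes `ν` parallel to `∇φ(q)`, and
pointing away from the side of `G` that contains `p` makes `⟨∇φ(q), ν⟩ φ(p) < 0`. A direct
computation shows that the derivative of `cosh d(·, p)` is a positive multiple of
`-⟨∇φ(q), ν⟩ φ(p)`. The statement about `J = f ∘ d(·, p)` then follows from the chain rule.
-/

lemma sq_add_sq_pos_of_ne_zero {v : ℝ × ℝ} (hv : v ≠ 0) : 0 < v.1 ^ 2 + v.2 ^ 2 := by
  rcases v with ⟨a, b⟩
  have : a ≠ 0 ∨ b ≠ 0 := by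
    contrapose! hv
    simp [hv]
  rcases this with h | h <;> positivity

/-- `cosh d(a, b)`: since `arcosh` unfolds to `Real.arcosh`,
`hypDist a b = Real.arcosh (hypCoshDist a b)` holds by `rfl`. -/
def hypCoshDist (a b : ℝ × ℝ) : ℝ :=
  1 + ((a.1 - b.1) ^ 2 + (a.2 - b.2) ^ 2) / (2 * a.2 * b.2)

lemma one_lt_hypCoshDist {a b : ℝ × ℝ} (ha : 0 < a.2) (hb : 0 < b.2) (hab : a ≠ b) :
    1 < hypCoshDist a b := by
  have hsq : 0 < (a.1 - b.1) ^ 2 + (a.2 - b.2) ^ 2 :=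
    sq_add_sq_pos_of_ne_zero (sub_ne_zero.2 hab)
  have := div_pos hsq (by positivity : 0 < 2 * a.2 * b.2)
  unfold hypCoshDist
  linarith

lemma hypDist_pos {a b : ℝ × ℝ} (ha : 0 < a.2) (hb : 0 < b.2) (hab : a ≠ b) :
    0 < hypDist a b :=
  Real.arcosh_pos (one_lt_hypCoshDist ha hb hab)

/-- `2 q₂² p₂` times the derivative of `cosh d(·, p)` at `q` in the direction `ν`. -/
def coshDistRate (q p ν : ℝ × ℝ) : ℝ :=
  2 * (q.1 - p.1) * ν.1 * q.2 + ν.2 * (q.2 ^ 2 - p.2 ^ 2 - (q.1 - p.1) ^ 2)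

lemma ne_of_coshDistRate_pos {q p ν : ℝ × ℝ} (h : 0 < coshDistRate q p ν) : q ≠ p := by
  rintro rfl
  simp [coshDistRate] at h

lemma hasDerivAt_hypCoshDist_line {q p : ℝ × ℝ} (ν : ℝ × ℝ) (hq : q.2 ≠ 0) (hp : p.2 ≠ 0) :
    HasDerivAt (fun t : ℝ => hypCoshDist (q + t • ν) p)
      (coshDistRate q p ν / (2 * q.2 ^ 2 * p.2)) 0 := by
  have hcoord : ∀ a b : ℝ, HasDerivAt (fun t : ℝ => a + t * b) b 0 := fun a b => by
    simpa using ((hasDerivAt_id (0 : ℝ)).mul_const b).const_add a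
  have hnum := (((hcoord q.1 ν.1).sub_const p.1).pow 2).add
    (((hcoord q.2 ν.2).sub_const p.2).pow 2)
  have hden := ((hcoord q.2 ν.2).const_mul 2).mul_const p.2
  have := (hnum.div hden (by simpa using mul_ne_zero (mul_ne_zero two_ne_zero hq) hp)).const_add 1
  refine this.congr_deriv ?_
  simp only [coshDistRate, Pi.add_apply, Pi.pow_apply, zero_mul, add_zero]
  field_simp
  ring

lemma exists_pos_hasDerivAt_hypDist_line {q p ν : ℝ × ℝ} (hq : 0 < q.2) (hp : 0 < p.2)
    (hrate : 0 < coshDistRate q p ν) :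
    ∃ L, 0 < L ∧ HasDerivAt (fun t : ℝ => hypDist (q + t • ν) p) L 0 := by
  have hcosh := one_lt_hypCoshDist hq hp (ne_of_coshDistRate_pos hrate)
  refine ⟨_, ?_, (Real.hasDerivAt_arcosh hcosh).comp_of_eq 0
    (hasDerivAt_hypCoshDist_line ν hq.ne' hp.ne') (by simp [hypCoshDist])⟩
  have : 0 < Real.sqrt (hypCoshDist q p ^ 2 - 1) := Real.sqrt_pos.2 (by nlinarith)
  positivity

lemma inner_eq_zero_of_tendsto_tangent {G : Set (ℝ × ℝ)} {q ν v : ℝ × ℝ} {γ : ℝ → ℝ × ℝ}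
    (htang : Tendsto (fun x : ℝ × ℝ =>
        |(x.1 - q.1) * ν.1 + (x.2 - q.2) * ν.2| /
          Real.sqrt ((x.1 - q.1) ^ 2 + (x.2 - q.2) ^ 2))
      (𝓝[G \ {q}] q) (𝓝 0))
    (hγ : HasDerivAt γ v 0) (hγq : γ 0 = q) (hv : v ≠ 0) (hγG : ∀ᶠ s in 𝓝[>] 0, γ s ∈ G) :
    v.1 * ν.1 + v.2 * ν.2 = 0 := by
  set g : ℝ × ℝ → ℝ := fun w => |w.1 * ν.1 + w.2 * ν.2| / Real.sqrt (w.1 ^ 2 + w.2 ^ 2)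
  have hnorm := sq_add_sq_pos_of_ne_zero hv
  have hg_cont : ContinuousAt g v :=
    (by fun_prop : ContinuousAt (fun w : ℝ × ℝ => |w.1 * ν.1 + w.2 * ν.2|) v).div
      (by fun_prop) (Real.sqrt_pos.2 hnorm).ne'
  have hg_smul : ∀ (s : ℝ) (w : ℝ × ℝ), 0 < s → g (s⁻¹ • w) = g w := fun s w hs => by
    simp only [g, Prod.smul_fst, Prod.smul_snd, smul_eq_mul]
    rw [show (s⁻¹ * w.1) ^ 2 + (s⁻¹ * w.2) ^ 2 = s⁻¹ ^ 2 * (w.1 ^ 2 + w.2 ^ 2) by ring,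
      show s⁻¹ * w.1 * ν.1 + s⁻¹ * w.2 * ν.2 = s⁻¹ * (w.1 * ν.1 + w.2 * ν.2) by ring,
      Real.sqrt_mul (by positivity), Real.sqrt_sq (by positivity), abs_mul,
      abs_of_pos (by positivity), mul_div_mul_left _ _ (by positivity)]
  have hslope : Tendsto (fun s : ℝ => s⁻¹ • (γ s - q)) (𝓝[>] 0) (𝓝 v) := by
    simpa [hγq] using hγ.tendsto_slope_zero_right
  have hne : ∀ᶠ s in 𝓝[>] 0, γ s ≠ q := by
    filter_upwards [hslope.eventually_ne hv] with s hs h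
    simp [h] at hs
  have hγlim : Tendsto γ (𝓝[>] 0) (𝓝[G \ {q}] q) :=
    tendsto_nhdsWithin_iff.2 ⟨hγq ▸ hγ.continuousAt.tendsto.mono_left nhdsWithin_le_nhds,
      hγG.and hne⟩
  have hlim : Tendsto (fun s : ℝ => g (s⁻¹ • (γ s - q))) (𝓝[>] 0) (𝓝 0) := by
    refine (htang.comp hγlim).congr' ?_
    filter_upwards [self_mem_nhdsWithin] with s hs
    exact (hg_smul s (γ s - q) hs).symm
  have hgv : g v = 0 := tendsto_nhds_unique ((hg_cont.tendsto).comp hslope) hlim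
  simpa [g, (Real.sqrt_pos.2 hnorm).ne'] using hgv

lemma IsUnitNormalAwayFrom.not_eventually_mem {G H : Set (ℝ × ℝ)} {q ν : ℝ × ℝ}
    (hν : IsUnitNormalAwayFrom G H q ν) : ¬ ∀ᶠ t in 𝓝[>] (0 : ℝ), q + t • ν ∈ H := fun h =>
  let ⟨_, hout, hin⟩ := (hν.2.2.and h).exists
  hout (subset_closure hin)

lemma eventually_snd_add_smul_pos {q : ℝ × ℝ} (hq : 0 < q.2) (ν : ℝ × ℝ) :
    ∀ᶠ t in 𝓝[>] (0 : ℝ), 0 < (q + t • ν).2 := by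
  have : Tendsto (fun t : ℝ => (q + t • ν).2) (𝓝 0) (𝓝 q.2) := by
    simpa using ((continuous_const.add (continuous_id.smul continuous_const)).snd.tendsto 0 :
      Tendsto (fun t : ℝ => (q + t • ν).2) _ _)
  exact nhdsWithin_le_nhds (this.eventually (lt_mem_nhds hq))

lemma coshDistRate_pos_of_vertical {a : ℝ} {H : Set (ℝ × ℝ)} {q p ν : ℝ × ℝ}
    (hH : H = {x | 0 < x.2 ∧ x.1 < a} ∨ H = {x | 0 < x.2 ∧ a < x.1})
    (hq : q ∈ {x : ℝ × ℝ | 0 < x.2 ∧ x.1 = a}) (hp : p ∈ H)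
    (hν : IsUnitNormalAwayFrom {x | 0 < x.2 ∧ x.1 = a} H q ν) :
    0 < coshDistRate q p ν := by
  obtain ⟨hq2, rfl⟩ := hq
  have hν2 : ν.2 = 0 := by
    have hline : HasDerivAt (fun s : ℝ => q + s • ((0, 1) : ℝ × ℝ)) (0, 1) 0 := by
      simpa using ((hasDerivAt_id (0 : ℝ)).smul_const ((0, 1) : ℝ × ℝ)).const_add q
    have hG : ∀ᶠ s in 𝓝[>] (0 : ℝ), q + s • ((0, 1) : ℝ × ℝ) ∈ {x | 0 < x.2 ∧ x.1 = q.1} := by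
      filter_upwards [self_mem_nhdsWithin] with s (hs : 0 < s)
      exact ⟨by simpa using add_pos hq2 hs, by simp⟩
    simpa using inner_eq_zero_of_tendsto_tangent hν.2.1 hline (by simp) (by simp) hG
  have hν1 : ν.1 ^ 2 = 1 := by simpa [hν2] using hν.1
  have hrate : coshDistRate q p ν = 2 * q.2 * ν.1 * (q.1 - p.1) := by
    simp only [coshDistRate, hν2]; ring
  have hmove : ∀ t : ℝ, (q + t • ν).1 = q.1 + t * ν.1 := fun t => rfl
  rcases hH with rfl | rfl
  · have hν1pos : 0 < ν.1 := by
      by_contra! hneg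
      have : ν.1 = -1 := by nlinarith
      refine hν.not_eventually_mem ?_
      filter_upwards [eventually_snd_add_smul_pos hq2 ν, self_mem_nhdsWithin] with t ht ht0
      exact ⟨ht, by rw [hmove, this]; linarith [show (0:ℝ) < t from ht0]⟩
    rw [hrate]
    exact mul_pos (mul_pos (mul_pos two_pos hq2) hν1pos) (sub_pos.2 hp.2)
  · have hν1neg : ν.1 < 0 := by
      by_contra! hpos
      have : ν.1 = 1 := by nlinarith
      refine hν.not_eventually_mem ?_
      filter_upwards [eventually_snd_add_smul_pos hq2 ν, self_mem_nhdsWithin] with t ht ht0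
      exact ⟨ht, by rw [hmove, this]; linarith [show (0:ℝ) < t from ht0]⟩
    rw [hrate]
    exact mul_pos_of_neg_of_neg (mul_neg_of_pos_of_neg (mul_pos two_pos hq2) hν1neg)
      (sub_neg.2 hp.2)

lemma coshDistRate_pos_of_circle {c r : ℝ} {H : Set (ℝ × ℝ)} {q p ν : ℝ × ℝ} (hr : 0 < r)
    (hH : H = {x | 0 < x.2 ∧ (x.1 - c) ^ 2 + x.2 ^ 2 < r ^ 2} ∨
      H = {x | 0 < x.2 ∧ r ^ 2 < (x.1 - c) ^ 2 + x.2 ^ 2})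
    (hq : q ∈ {x : ℝ × ℝ | 0 < x.2 ∧ (x.1 - c) ^ 2 + x.2 ^ 2 = r ^ 2}) (hp : p ∈ H)
    (hν : IsUnitNormalAwayFrom {x | 0 < x.2 ∧ (x.1 - c) ^ 2 + x.2 ^ 2 = r ^ 2} H q ν) :
    0 < coshDistRate q p ν := by
  obtain ⟨hq2, hqc⟩ := hq
  set γ : ℝ → ℝ × ℝ := fun s => (c + (q.1 - c) * Real.cos s - q.2 * Real.sin s,
    (q.1 - c) * Real.sin s + q.2 * Real.cos s)
  have hγ : HasDerivAt γ (-q.2, q.1 - c) 0 := by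
    have h1 := (((Real.hasDerivAt_cos 0).const_mul (q.1 - c)).const_add c).sub
      ((Real.hasDerivAt_sin 0).const_mul q.2)
    have h2 := ((Real.hasDerivAt_sin 0).const_mul (q.1 - c)).add
      ((Real.hasDerivAt_cos 0).const_mul q.2)
    simpa using h1.prodMk h2
  have hγq : γ 0 = q := by simp [γ]
  have hγG : ∀ᶠ s in 𝓝[>] 0, γ s ∈ {x : ℝ × ℝ | 0 < x.2 ∧ (x.1 - c) ^ 2 + x.2 ^ 2 = r ^ 2} := by
    have hcont : Tendsto (fun s => (γ s).2) (𝓝 0) (𝓝 q.2) :=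
      hγq ▸ hγ.continuousAt.snd.tendsto
    filter_upwards [nhdsWithin_le_nhds (hcont.eventually (lt_mem_nhds hq2))] with s hs
    refine ⟨hs, ?_⟩
    simp only [γ]
    linear_combination ((q.1 - c) ^ 2 + q.2 ^ 2) * Real.sin_sq_add_cos_sq s + hqc
  have htan : q.2 * ν.1 = (q.1 - c) * ν.2 := by
    have := inner_eq_zero_of_tendsto_tangent hν.2.1 hγ hγq (by simp [hq2.ne']) hγG
    linarith
  set μ := (q.1 - c) * ν.1 + q.2 * ν.2
  have hμsq : μ ^ 2 = r ^ 2 := by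
    linear_combination ((q.1 - c) ^ 2 + q.2 ^ 2) * hν.1 + hqc - (q.2 * ν.1 - (q.1 - c) * ν.2) * htan
  have hμ : μ ≠ 0 := fun h => by nlinarith
  have hrate : r ^ 2 * coshDistRate q p ν = μ * q.2 * (r ^ 2 - ((p.1 - c) ^ 2 + p.2 ^ 2)) := by
    unfold coshDistRate
    linear_combination (μ * q.2 - (2 * (q.1 - p.1) * ν.1 * q.2 +
        ν.2 * (q.2 ^ 2 - p.2 ^ 2 - (q.1 - p.1) ^ 2))) * hqc +
      (2 * (q.1 - p.1) * q.2 * q.2 - (q.2 ^ 2 - p.2 ^ 2 - (q.1 - p.1) ^ 2) * (q.1 - c)) * htan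
  have hdist : ∀ t : ℝ,
      ((q + t • ν).1 - c) ^ 2 + (q + t • ν).2 ^ 2 = r ^ 2 + t * (2 * μ + t) := by
    intro t
    simp only [Prod.fst_add, Prod.snd_add, Prod.smul_fst, Prod.smul_snd, smul_eq_mul]
    linear_combination hqc + t ^ 2 * hν.1
  suffices 0 < r ^ 2 * coshDistRate q p ν from pos_of_mul_pos_right this (sq_nonneg r)
  rw [hrate]
  rcases hH with rfl | rfl
  · have hμpos : 0 < μ := by
      refine hμ.lt_or_gt.resolve_left fun hμneg => hν.not_eventually_mem ?_
      filter_upwards [eventually_snd_add_smul_pos hq2 ν,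
        Ioo_mem_nhdsGT (by linarith : (0 : ℝ) < -2 * μ)] with t ht ht'
      exact ⟨ht, by rw [hdist]; nlinarith [ht'.1, ht'.2]⟩
    have : (p.1 - c) ^ 2 + p.2 ^ 2 < r ^ 2 := hp.2
    exact mul_pos (mul_pos hμpos hq2) (by linarith)
  · have hμneg : μ < 0 := by
      refine hμ.lt_or_gt.resolve_right fun hμpos => hν.not_eventually_mem ?_
      filter_upwards [eventually_snd_add_smul_pos hq2 ν, self_mem_nhdsWithin] with t ht ht'
      exact ⟨ht, by rw [hdist]; nlinarith [show (0 : ℝ) < t from ht']⟩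
    have : r ^ 2 < (p.1 - c) ^ 2 + p.2 ^ 2 := hp.2
    exact mul_pos_of_neg_of_neg (mul_neg_of_neg_of_pos hμneg hq2) (by linarith)

lemma IsGeodesicWithSide.subset_H2 {G H : Set (ℝ × ℝ)} (h : IsGeodesicWithSide G H) :
    G ⊆ H2 ∧ H ⊆ H2 := by
  rcases h with ⟨a, rfl, rfl | rfl⟩ | ⟨c, r, -, rfl, rfl | rfl⟩ <;>
    exact ⟨fun x hx => hx.1, fun x hx => hx.1⟩

lemma coshDistRate_pos {G H : Set (ℝ × ℝ)} {q p ν : ℝ × ℝ} (hGH : IsGeodesicWithSide G H)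
    (hq : q ∈ G) (hp : p ∈ H) (hν : IsUnitNormalAwayFrom G H q ν) :
    0 < coshDistRate q p ν := by
  rcases hGH with ⟨a, rfl, hH⟩ | ⟨c, r, hr, rfl, hH⟩
  · exact coshDistRate_pos_of_vertical hH hq hp hν
  · exact coshDistRate_pos_of_circle hr hH hq hp hν

theorem dist_outward_normal_derivative_pos_general
    (Ω : Set (ℝ × ℝ)) (p : ℝ × ℝ) (hp : p ∈ Ω) (q : ℝ × ℝ)
    (G H : Set (ℝ × ℝ)) (hGH : IsGeodesicWithSide G H) (hqG : q ∈ G) (hΩside : Ω ⊆ H)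
    (ν : ℝ × ℝ) (hν : IsUnitNormalAwayFrom G H q ν) :
    (∃ L : ℝ, 0 < L ∧
      Tendsto (fun t : ℝ => (hypDist (q + t • ν) p - hypDist q p) / t) (𝓝[>] 0) (𝓝 L)) ∧
    ∀ (J : ℝ × ℝ → ℝ) (f f' : ℝ → ℝ),
      (∀ x ∈ H2, J x = f (hypDist x p)) →
      (∀ r : ℝ, 0 < r → HasDerivAt f (f' r) r) →
      ContinuousOn f' (Set.Ioi 0) →
      (∀ r : ℝ, 0 < r → f' r < 0) →
      StrictAntiOn f (Set.Ici 0) →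
      ∃ M : ℝ, M < 0 ∧
        Tendsto (fun t : ℝ => (J (q + t • ν) - J q) / t) (𝓝[>] 0) (𝓝 M) := by
  have hq2 : 0 < q.2 := hGH.subset_H2.1 hqG
  have hp2 : 0 < p.2 := hGH.subset_H2.2 (hΩside hp)
  have hrate := coshDistRate_pos hGH hqG (hΩside hp) hν
  have hd := hypDist_pos hq2 hp2 (ne_of_coshDistRate_pos hrate)
  obtain ⟨L, hL, hder⟩ := exists_pos_hasDerivAt_hypDist_line hq2 hp2 hrate
  refine ⟨⟨L, hL, by simpa [div_eq_inv_mul] using hder.tendsto_slope_zero_right⟩,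
    fun J f f' hJ hf _ hf'neg _ =>
      ⟨f' (hypDist q p) * L, mul_neg_of_neg_of_pos (hf'neg _ hd) hL, ?_⟩⟩
  have hJder := (hf _ hd).comp_of_eq 0 hder (by simp)
  refine hJder.tendsto_slope_zero_right.congr' ?_
  filter_upwards [eventually_snd_add_smul_pos hq2 ν] with t ht
  simp [hJ _ ht, hJ q hq2, div_eq_inv_mul]

/-- **Lemma (normal derivative of the distance at a supporting geodesic).** Let
`Ω ⊆ ℍ²` be open and geodesically convex, `p ∈ Ω`, and `q ∈ ∂Ω ∩ ℍ²`. Let `G` be a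
complete hyperbolic geodesic through `q` such that `Ω` is contained in one of the two
components `H` of `ℍ² \ G`, and let `ν` be the Euclidean unit normal to `G` at `q`
pointing away from `H`. Then the one-sided directional derivative at `q` of
`x ↦ d(x,p)` in direction `ν` exists and is strictly positive; consequently, for any `J`
radial about `p`, `J(x) = f(d(x,p))` with `f` a `C¹` strictly decreasing function with
`f' < 0` on `(0,∞)`, the directional derivative of `J` at `q` in direction `ν` is
strictly negative. -/
theorem dist_outward_normal_derivative_pos
    (Ω : Set (ℝ × ℝ)) (hΩH : Ω ⊆ H2) (hopen : IsOpen Ω) (hconv : GeodesicallyConvex Ω)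
    (p : ℝ × ℝ) (hp : p ∈ Ω) (q : ℝ × ℝ) (hq : q ∈ frontier Ω ∩ H2)
    (G H : Set (ℝ × ℝ)) (hGH : IsGeodesicWithSide G H) (hqG : q ∈ G) (hΩside : Ω ⊆ H)
    (ν : ℝ × ℝ) (hν : IsUnitNormalAwayFrom G H q ν) :
    (∃ L : ℝ, 0 < L ∧
      Tendsto (fun t : ℝ => (hypDist (q + t • ν) p - hypDist q p) / t) (𝓝[>] 0) (𝓝 L)) ∧
    ∀ (J : ℝ × ℝ → ℝ) (f f' : ℝ → ℝ),
      (∀ x ∈ H2, J x = f (hypDist x p)) →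
      (∀ r : ℝ, 0 < r → HasDerivAt f (f' r) r) →
      ContinuousOn f' (Set.Ioi 0) →
      (∀ r : ℝ, 0 < r → f' r < 0) →
      StrictAntiOn f (Set.Ici 0) →
      ∃ M : ℝ, M < 0 ∧
        Tendsto (fun t : ℝ => (J (q + t • ν) - J q) / t) (𝓝[>] 0) (𝓝 M) :=
  dist_outward_normal_derivative_pos_general Ω p hp q G H hGH hqG hΩside ν hν
end
end

section
/- Let Ω ⊆ ℍ² be a nonempty bounded open set (its closure compact in ℍ²). Then there exists ε₀ > 0 such that for every nonempty set D ⊆ ∂Ω of hyperbolic diameter less than ε₀, there exists a Lipschitz function w : ℍ² → ℝ that vanishes on an open neighborhood of D, with 0 < ∫_Ω w² dA < ∞ and ∫_Ω |∇w|² dx dy < (1/4) ∫_Ω w² dA. In other words, the first mixed (Dirichlet on D, Neumann elsewhere) eigenvalue of Ω is strictly less than 1/4 whenever the Dirichlet region D has sufficiently small diameter. -/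
/-!
Pick `q ∈ D`. On `closure Ω` the height `y` is bounded by some `C`, so by
`cosh d = 1 + |a - b|² / (2 y_a y_b)` a set of small hyperbolic diameter containing `q` lies in a
small Euclidean ball `ball q r`. Points have zero capacity in the plane: the logarithmic cutoff
`min 1 (log⁺ (|p - q| / r) / log (R / r))` vanishes on `ball q r`, equals `1` off `ball q R`, and
its Dirichlet energy, estimated on dyadic annuli, is `O(1 / log (R / r))`. Choosing `|ball q R|`
to be `|Ω| / 2` keeps the hyperbolic mass `∫_Ω w² / y²` above `|Ω| / (2 C²)`, so taking `r`
small makes the energy less than a quarter of the mass.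
-/

open MeasureTheory Filter Set Topology

noncomputable section

open Metric

lemma log_one_add_le_hypDist {a b : ℝ × ℝ} (ha : 0 < a.2) (hb : 0 < b.2) :
    Real.log (1 + ((a.1 - b.1) ^ 2 + (a.2 - b.2) ^ 2) / (2 * a.2 * b.2)) ≤ hypDist a b := by
  have hs : 0 ≤ ((a.1 - b.1) ^ 2 + (a.2 - b.2) ^ 2) / (2 * a.2 * b.2) := by positivity
  exact Real.log_le_log (by linarith) (le_add_of_nonneg_right (Real.sqrt_nonneg _))

lemma dist_lt_of_hypDist_lt {a b : ℝ × ℝ} {C r : ℝ} (ha : 0 < a.2) (hb : 0 < b.2)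
    (haC : a.2 ≤ C) (hbC : b.2 ≤ C) (hr : 0 < r)
    (h : hypDist a b < Real.log (1 + r ^ 2 / (2 * C ^ 2))) : dist a b < r := by
  have hC : 0 < C := ha.trans_le haC
  have hs : ((a.1 - b.1) ^ 2 + (a.2 - b.2) ^ 2) / (2 * a.2 * b.2) < r ^ 2 / (2 * C ^ 2) := by
    have h' := (log_one_add_le_hypDist ha hb).trans_lt h
    rw [Real.log_lt_log_iff (by positivity) (by positivity)] at h'
    linarith
  rw [div_lt_div_iff₀ (by positivity) (by positivity)] at hs
  have hsq : (a.1 - b.1) ^ 2 + (a.2 - b.2) ^ 2 < r ^ 2 := by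
    nlinarith [mul_le_mul haC hbC hb.le hC.le, sq_nonneg r]
  rw [Prod.dist_eq, Real.dist_eq, Real.dist_eq, max_lt_iff]
  exact ⟨abs_lt_of_sq_lt_sq (by nlinarith) hr.le, abs_lt_of_sq_lt_sq (by nlinarith) hr.le⟩

lemma gradSq_nonneg (u : ℝ × ℝ → ℝ) (p : ℝ × ℝ) : 0 ≤ gradSq u p := by
  unfold gradSq; positivity

lemma measurable_gradSq (u : ℝ × ℝ → ℝ) : Measurable (gradSq u) :=
  ((measurable_fderiv_apply_const ℝ u _).pow_const 2).add
    ((measurable_fderiv_apply_const ℝ u _).pow_const 2)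

lemma gradSq_eq_zero_of_eventuallyEq_const {u : ℝ × ℝ → ℝ} {p : ℝ × ℝ} {c : ℝ}
    (h : u =ᶠ[𝓝 p] fun _ => c) : gradSq u p = 0 := by
  simp [gradSq, pdx, pdy, h.fderiv_eq]

lemma gradSq_le_of_lipschitzOnWith {u : ℝ × ℝ → ℝ} {p : ℝ × ℝ} {K : NNReal}
    {s : Set (ℝ × ℝ)} (hs : s ∈ 𝓝 p) (hu : LipschitzOnWith K u s) :
    gradSq u p ≤ 2 * (K : ℝ) ^ 2 := by
  have hpartial : ∀ v : ℝ × ℝ, ‖v‖ = 1 → fderiv ℝ u p v ^ 2 ≤ (K : ℝ) ^ 2 := fun v hv => by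
    rw [← sq_abs]
    refine pow_le_pow_left₀ (abs_nonneg _) ?_ 2
    simpa [hv] using ((fderiv ℝ u p).le_opNorm v).trans
      (by rw [hv, mul_one]; exact norm_fderiv_le_of_lipschitzOn ℝ hs hu)
  have hx := hpartial (1, 0) (by simp)
  have hy := hpartial (0, 1) (by simp)
  unfold gradSq pdx pdy
  linarith

lemma abs_log_sub_log_le {β x y : ℝ} (hβ : 0 < β) (hx : β ≤ x) (hy : β ≤ y) :
    |Real.log x - Real.log y| ≤ |x - y| / β := by
  wlog hyx : y ≤ x generalizing x y
  · rw [abs_sub_comm, abs_sub_comm x]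
    exact this hy hx (le_of_not_ge hyx)
  have hy0 : 0 < y := hβ.trans_le hy
  have hx0 : 0 < x := hy0.trans_le hyx
  rw [abs_of_nonneg (sub_nonneg.2 (Real.log_le_log hy0 hyx)), abs_of_nonneg (sub_nonneg.2 hyx),
    ← Real.log_div hx0.ne' hy0.ne']
  calc Real.log (x / y) ≤ x / y - 1 := Real.log_le_sub_one_of_pos (by positivity)
    _ = (x - y) / y := by field_simp
    _ ≤ (x - y) / β := div_le_div_of_nonneg_left (by linarith) hβ hy

lemma exists_pow_two_mul_le_le {x r : ℝ} {N : ℕ} (hN : 0 < N) (hr : 0 < r) (h₁ : r ≤ x)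
    (h₂ : x ≤ 2 ^ N * r) : ∃ k < N, 2 ^ k * r ≤ x ∧ x ≤ 2 ^ (k + 1) * r := by
  obtain ⟨n, hn₁, hn₂⟩ := exists_nat_pow_near ((one_le_div hr).2 h₁) one_lt_two
  rw [le_div_iff₀ hr] at hn₁
  rw [div_lt_iff₀ hr] at hn₂
  rcases lt_or_ge n N with hnN | hNn
  · exact ⟨n, hnN, hn₁, hn₂.le⟩
  · refine ⟨N - 1, by omega, le_trans ?_ hn₁, by rwa [Nat.sub_add_cancel hN]⟩
    gcongr
    · norm_num
    · omega

lemma volume_real_closedBall_prod (q : ℝ × ℝ) {ρ : ℝ} (hρ : 0 ≤ ρ) :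
    volume.real (closedBall q ρ) = 4 * ρ ^ 2 := by
  rw [← closedBall_prod_same, Measure.volume_eq_prod, measureReal_prod_prod,
    Real.volume_real_closedBall hρ, Real.volume_real_closedBall hρ]
  ring

def dyadicAnnulus (q : ℝ × ℝ) (r : ℝ) (k : ℕ) : Set (ℝ × ℝ) :=
  closedBall q (2 ^ (k + 1) * r) \ ball q (2 ^ k * r)

def dyadicStep (q : ℝ × ℝ) (r M : ℝ) (N : ℕ) (p : ℝ × ℝ) : ℝ :=
  ∑ k ∈ Finset.range N, (dyadicAnnulus q r k).indicator (fun _ => M / (2 ^ k * r) ^ 2) p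

section dyadicStep

variable {q : ℝ × ℝ} {r M : ℝ} {N : ℕ}

lemma measurableSet_dyadicAnnulus (q : ℝ × ℝ) (r : ℝ) (k : ℕ) :
    MeasurableSet (dyadicAnnulus q r k) :=
  measurableSet_closedBall.diff measurableSet_ball

lemma volume_dyadicAnnulus_ne_top (q : ℝ × ℝ) (r : ℝ) (k : ℕ) :
    volume (dyadicAnnulus q r k) ≠ ⊤ :=
  measure_ne_top_of_subset sdiff_subset measure_closedBall_lt_top.ne

lemma integrable_indicator_dyadicAnnulus (q : ℝ × ℝ) (r c : ℝ) (k : ℕ) :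
    Integrable ((dyadicAnnulus q r k).indicator fun _ => c) :=
  (integrable_indicator_iff (measurableSet_dyadicAnnulus q r k)).2
    (integrableOn_const (volume_dyadicAnnulus_ne_top q r k))

lemma integrable_dyadicStep : Integrable (dyadicStep q r M N) :=
  integrable_finsetSum _ fun k _ => integrable_indicator_dyadicAnnulus q r _ k

lemma dyadicStep_nonneg (hM : 0 ≤ M) (p : ℝ × ℝ) : 0 ≤ dyadicStep q r M N p :=
  Finset.sum_nonneg fun _ _ => indicator_nonneg (fun _ _ => by positivity) p

lemma div_sq_dist_le_dyadicStep {p : ℝ × ℝ} (hN : 0 < N) (hr : 0 < r) (hM : 0 ≤ M)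
    (h₁ : r ≤ dist p q) (h₂ : dist p q ≤ 2 ^ N * r) : M / dist p q ^ 2 ≤ dyadicStep q r M N p := by
  obtain ⟨k, hkN, hk₁, hk₂⟩ := exists_pow_two_mul_le_le hN hr h₁ h₂
  have hpA : p ∈ dyadicAnnulus q r k := ⟨mem_closedBall.2 hk₂, fun h => (mem_ball.1 h).not_ge hk₁⟩
  calc M / dist p q ^ 2 ≤ M / (2 ^ k * r) ^ 2 := by gcongr
    _ = (dyadicAnnulus q r k).indicator (fun _ => M / (2 ^ k * r) ^ 2) p :=
        (indicator_of_mem hpA (fun _ => M / (2 ^ k * r) ^ 2)).symm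
    _ ≤ dyadicStep q r M N p :=
        Finset.single_le_sum
          (f := fun i => (dyadicAnnulus q r i).indicator (fun _ => M / (2 ^ i * r) ^ 2) p)
          (fun _ _ => indicator_nonneg (fun _ _ => by positivity) p) (Finset.mem_range.2 hkN)

lemma integral_dyadicStep_le (hr : 0 < r) (hM : 0 ≤ M) :
    ∫ p, dyadicStep q r M N p ≤ 16 * N * M := by
  have hterm : ∀ k, ∫ p, (dyadicAnnulus q r k).indicator (fun _ => M / (2 ^ k * r) ^ 2) p ≤
      16 * M := fun k => by
    rw [integral_indicator_const _ (measurableSet_dyadicAnnulus q r k), smul_eq_mul]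
    have hvol : volume.real (dyadicAnnulus q r k) ≤ 4 * (2 ^ (k + 1) * r) ^ 2 := by
      rw [← volume_real_closedBall_prod q (by positivity)]
      exact measureReal_mono sdiff_subset measure_closedBall_lt_top.ne
    calc volume.real (dyadicAnnulus q r k) * (M / (2 ^ k * r) ^ 2)
        ≤ 4 * (2 ^ (k + 1) * r) ^ 2 * (M / (2 ^ k * r) ^ 2) := by gcongr
      _ = 16 * M := by field_simp; ring
  unfold dyadicStep
  rw [integral_finsetSum _ fun k _ => integrable_indicator_dyadicAnnulus q r _ k]
  calc _ ≤ ∑ _k ∈ Finset.range N, 16 * M := Finset.sum_le_sum fun k _ => hterm k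
    _ = 16 * N * M := by simp; ring

lemma integral_le_of_le_div_sq_dist {f : ℝ × ℝ → ℝ} (hN : 0 < N) (hr : 0 < r) (hM : 0 ≤ M)
    (hfm : AEStronglyMeasurable f) (hf₀ : ∀ p, 0 ≤ f p)
    (hf_near : ∀ p, dist p q < r → f p = 0) (hf_far : ∀ p, 2 ^ N * r < dist p q → f p = 0)
    (hf : ∀ p, r ≤ dist p q → f p ≤ M / dist p q ^ 2) :
    Integrable f ∧ ∫ p, f p ≤ 16 * N * M := by
  have hf_le : ∀ p, f p ≤ dyadicStep q r M N p := by
    intro p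
    by_cases hp : r ≤ dist p q ∧ dist p q ≤ 2 ^ N * r
    · exact (hf p hp.1).trans (div_sq_dist_le_dyadicStep hN hr hM hp.1 hp.2)
    · rcases not_and_or.1 hp with hp | hp
      · exact (hf_near p (not_le.1 hp)).trans_le (dyadicStep_nonneg hM p)
      · exact (hf_far p (not_le.1 hp)).trans_le (dyadicStep_nonneg hM p)
  refine ⟨integrable_dyadicStep.mono' hfm
    (ae_of_all _ fun p => (Real.norm_of_nonneg (hf₀ p)).trans_le (hf_le p)), ?_⟩
  exact (integral_mono_of_nonneg (ae_of_all _ hf₀) integrable_dyadicStep (ae_of_all _ hf_le)).trans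
    (integral_dyadicStep_le hr hM)

end dyadicStep

def logCutoff (q : ℝ × ℝ) (r R : ℝ) (p : ℝ × ℝ) : ℝ :=
  min 1 (Real.log (max (dist p q) r / r) / Real.log (R / r))

section logCutoff

variable {q p : ℝ × ℝ} {r R : ℝ}

lemma logCutoff_of_dist_le (hp : dist p q ≤ r) : logCutoff q r R p = 0 := by
  rcases eq_or_ne r 0 with rfl | hr <;> simp [logCutoff, *]

lemma logCutoff_of_le_dist (hr : 0 < r) (hrR : r < R) (hp : R ≤ dist p q) :
    logCutoff q r R p = 1 := by
  have hL : 0 < Real.log (R / r) := Real.log_pos ((one_lt_div hr).2 hrR)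
  refine min_eq_left ((one_le_div hL).2 (Real.log_le_log (div_pos (hr.trans hrR) hr) ?_))
  rw [max_eq_left (hrR.le.trans hp)]
  gcongr

lemma abs_logCutoff_sub_le {x y : ℝ × ℝ} {β : ℝ} (hr : 0 < r) (hrR : r < R) (hβ : 0 < β)
    (hx : β ≤ max (dist x q) r) (hy : β ≤ max (dist y q) r) :
    |logCutoff q r R x - logCutoff q r R y| ≤ dist x y / (β * Real.log (R / r)) := by
  have hL : 0 < Real.log (R / r) := Real.log_pos ((one_lt_div hr).2 hrR)
  calc |logCutoff q r R x - logCutoff q r R y|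
      ≤ |Real.log (max (dist x q) r / r) / Real.log (R / r) -
          Real.log (max (dist y q) r / r) / Real.log (R / r)| :=
        (abs_min_sub_min_le_max _ _ _ _).trans_eq (by simp)
    _ = |Real.log (max (dist x q) r) - Real.log (max (dist y q) r)| / Real.log (R / r) := by
        rw [← sub_div, abs_div, abs_of_pos hL, Real.log_div (hβ.trans_le hx).ne' hr.ne',
          Real.log_div (hβ.trans_le hy).ne' hr.ne', sub_sub_sub_cancel_right]
    _ ≤ dist x y / β / Real.log (R / r) := by
        gcongr
        exact (abs_log_sub_log_le hβ hx hy).trans (by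
          gcongr; exact (abs_max_sub_max_le_abs _ _ _).trans (abs_dist_sub_le x y q))
    _ = dist x y / (β * Real.log (R / r)) := div_div _ _ _

lemma lipschitzWith_logCutoff (hr : 0 < r) (hrR : r < R) :
    LipschitzWith (Real.toNNReal (1 / (r * Real.log (R / r)))) (logCutoff q r R) :=
  LipschitzWith.of_dist_le' fun x y => by
    rw [Real.dist_eq, one_div_mul_eq_div]
    exact abs_logCutoff_sub_le hr hrR hr (le_max_right _ _) (le_max_right _ _)

lemma gradSq_logCutoff_of_dist_lt (hp : dist p q < r) : gradSq (logCutoff q r R) p = 0 :=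
  gradSq_eq_zero_of_eventuallyEq_const <|
    ((continuous_id.dist continuous_const).tendsto p).eventually_lt_const hp |>.mono
      fun _ hx => logCutoff_of_dist_le hx.le

lemma gradSq_logCutoff_of_lt_dist (hr : 0 < r) (hrR : r < R) (hp : R < dist p q) :
    gradSq (logCutoff q r R) p = 0 :=
  gradSq_eq_zero_of_eventuallyEq_const <|
    ((continuous_id.dist continuous_const).tendsto p).eventually_const_lt hp |>.mono
      fun _ hx => logCutoff_of_le_dist hr hrR hx.le

lemma gradSq_logCutoff_le (hr : 0 < r) (hrR : r < R) (hp : r ≤ dist p q) :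
    gradSq (logCutoff q r R) p ≤ 8 / (Real.log (R / r) ^ 2 * dist p q ^ 2) := by
  set σ := dist p q
  have hσ : 0 < σ := hr.trans_le hp
  have hL : 0 < Real.log (R / r) := Real.log_pos ((one_lt_div hr).2 hrR)
  have hlip : LipschitzOnWith (Real.toNNReal (2 / (σ * Real.log (R / r)))) (logCutoff q r R)
      (ball p (σ / 2)) := by
    refine LipschitzOnWith.of_dist_le' fun x hx y hy => ?_
    have hfar : ∀ z ∈ ball p (σ / 2), σ / 2 ≤ max (dist z q) r := fun z hz =>
      le_max_of_le_left (by linarith [dist_triangle p z q, dist_comm p z, mem_ball.1 hz])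
    calc dist (logCutoff q r R x) (logCutoff q r R y)
        ≤ dist x y / (σ / 2 * Real.log (R / r)) :=
          abs_logCutoff_sub_le hr hrR (by positivity) (hfar x hx) (hfar y hy)
      _ = 2 / (σ * Real.log (R / r)) * dist x y := by field_simp
  calc gradSq (logCutoff q r R) p ≤ 2 * (Real.toNNReal (2 / (σ * Real.log (R / r))) : ℝ) ^ 2 :=
        gradSq_le_of_lipschitzOnWith (ball_mem_nhds p (by positivity)) hlip
    _ = 8 / (Real.log (R / r) ^ 2 * σ ^ 2) := by
        rw [Real.coe_toNNReal _ (by positivity)]; field_simp; ring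

lemma integral_gradSq_logCutoff_le (q : ℝ × ℝ) (hr : 0 < r) {N : ℕ} (hN : 0 < N) :
    Integrable (gradSq (logCutoff q r (2 ^ N * r))) ∧
      ∫ p, gradSq (logCutoff q r (2 ^ N * r)) p ≤ 128 / (N * Real.log 2 ^ 2) := by
  have hrR : r < 2 ^ N * r := lt_mul_left hr (one_lt_pow₀ one_lt_two hN.ne')
  have hL : Real.log (2 ^ N * r / r) = N * Real.log 2 := by
    rw [mul_div_cancel_right₀ _ hr.ne', Real.log_pow]
  obtain ⟨hint, hle⟩ := integral_le_of_le_div_sq_dist (M := 8 / (N * Real.log 2) ^ 2) hN hr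
    (by positivity) (measurable_gradSq _).aestronglyMeasurable (gradSq_nonneg _)
    (fun _ => gradSq_logCutoff_of_dist_lt) (fun _ => gradSq_logCutoff_of_lt_dist hr hrR)
    (fun p hp => (gradSq_logCutoff_le hr hrR hp).trans_eq (by rw [hL]; field_simp))
  refine ⟨hint, hle.trans_eq ?_⟩
  field_simp
  ring

lemma exists_integral_gradSq_logCutoff_lt {δ : ℝ} (hR : 0 < R) (hδ : 0 < δ) :
    ∃ r, 0 < r ∧ r < R ∧
      ∀ q, Integrable (gradSq (logCutoff q r R)) ∧ ∫ p, gradSq (logCutoff q r R) p < δ := by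
  obtain ⟨N, hN⟩ := exists_nat_gt (128 / (δ * Real.log 2 ^ 2))
  have hN₀ : 0 < N := by
    exact_mod_cast (by positivity : (0 : ℝ) < 128 / (δ * Real.log 2 ^ 2)).trans hN
  have hRr : 2 ^ N * (R / 2 ^ N) = R := mul_div_cancel₀ _ (by positivity)
  refine ⟨R / 2 ^ N, by positivity, div_lt_self hR (one_lt_pow₀ one_lt_two hN₀.ne'), fun q => ?_⟩
  obtain ⟨hint, hle⟩ := integral_gradSq_logCutoff_le q (by positivity : 0 < R / 2 ^ N) hN₀
  rw [hRr] at hint hle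
  refine ⟨hint, hle.trans_lt ?_⟩
  rw [div_lt_iff₀ (by positivity)] at hN ⊢
  linarith

end logCutoff

lemma integrableOn_sq_div_sq {Ω : Set (ℝ × ℝ)} {w : ℝ × ℝ → ℝ} (hw : Continuous w)
    (hcomp : IsCompact (closure Ω)) (hclH : closure Ω ⊆ H2) :
    IntegrableOn (fun p => w p ^ 2 / p.2 ^ 2) Ω :=
  (((hw.pow 2).continuousOn.div (continuous_snd.pow 2).continuousOn fun _ hp =>
    (pow_pos (hclH hp) 2).ne').integrableOn_compact hcomp).mono_set subset_closure

lemma sub_div_sq_le_setIntegral_sq_div_sq {Ω : Set (ℝ × ℝ)} {w : ℝ × ℝ → ℝ} {q : ℝ × ℝ}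
    {R C : ℝ} (hΩ : MeasurableSet Ω) (hvol : volume Ω ≠ ⊤) (hR : 0 ≤ R)
    (hpos : ∀ p ∈ Ω, 0 < p.2) (hC : ∀ p ∈ Ω, p.2 ≤ C) (hw : ∀ p ∈ Ω, R < dist p q → w p = 1)
    (hint : IntegrableOn (fun p => w p ^ 2 / p.2 ^ 2) Ω) :
    (volume.real Ω - 4 * R ^ 2) / C ^ 2 ≤ ∫ p in Ω, w p ^ 2 / p.2 ^ 2 := by
  set S := Ω \ closedBall q R
  have hS : volume.real Ω - 4 * R ^ 2 ≤ volume.real S := by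
    rw [← volume_real_closedBall_prod q hR]
    exact le_measureReal_sdiff measure_closedBall_lt_top.ne
  calc (volume.real Ω - 4 * R ^ 2) / C ^ 2 ≤ ∫ _ in S, 1 / C ^ 2 := by
        rw [setIntegral_const, smul_eq_mul, mul_one_div]
        gcongr
    _ ≤ ∫ p in S, w p ^ 2 / p.2 ^ 2 :=
        setIntegral_mono_on (integrableOn_const (measure_ne_top_of_subset sdiff_subset hvol))
          (hint.mono_set sdiff_subset) (hΩ.diff measurableSet_closedBall) fun p hp => by
            rw [hw p hp.1 (not_le.1 (hp.2 ∘ mem_closedBall.2)), one_pow]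
            exact one_div_le_one_div_of_le (pow_pos (hpos p hp.1) 2)
              (pow_le_pow_left₀ (hpos p hp.1).le (hC p hp.1) 2)
    _ ≤ ∫ p in Ω, w p ^ 2 / p.2 ^ 2 :=
        setIntegral_mono_set hint (ae_of_all _ fun p => by positivity) sdiff_subset.eventuallyLE

theorem first_mixed_eigenvalue_small_general
    (Ω : Set (ℝ × ℝ)) (hne : Ω.Nonempty) (hopen : IsOpen Ω)
    (hcomp : IsCompact (closure Ω)) (hclH : closure Ω ⊆ H2) :
    ∃ ε₀ : ℝ, 0 < ε₀ ∧
      ∀ D : Set (ℝ × ℝ), D ⊆ frontier Ω → D.Nonempty →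
        (∀ a ∈ D, ∀ b ∈ D, hypDist a b < ε₀) →
        ∃ w : ℝ × ℝ → ℝ, (∃ K : NNReal, LipschitzWith K w) ∧
          (∃ V : Set (ℝ × ℝ), IsOpen V ∧ D ⊆ V ∧ ∀ x ∈ V, w x = 0) ∧
          IntegrableOn (fun p : ℝ × ℝ => w p ^ 2 / p.2 ^ 2) Ω volume ∧
          0 < (∫ p in Ω, w p ^ 2 / p.2 ^ 2) ∧
          (∫ p in Ω, gradSq w p) < (1 / 4) * ∫ p in Ω, w p ^ 2 / p.2 ^ 2 := by
  obtain ⟨C, hC, hyC⟩ : ∃ C > 0, ∀ p ∈ closure Ω, p.2 ≤ C := by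
    obtain ⟨p₀, hp₀, hmax⟩ := hcomp.exists_isMaxOn hne.closure continuous_snd.continuousOn
    exact ⟨p₀.2, hclH hp₀, fun p hp => hmax hp⟩
  have hvol : volume Ω ≠ ⊤ := ((measure_mono subset_closure).trans_lt hcomp.measure_lt_top).ne
  have hm : 0 < volume.real Ω := ENNReal.toReal_pos (hopen.measure_pos volume hne).ne' hvol
  set R := √(volume.real Ω / 8)
  obtain ⟨r, hr, hrR, hcut⟩ := exists_integral_gradSq_logCutoff_lt
    (Real.sqrt_pos.2 (by positivity) : 0 < R) (by positivity : 0 < volume.real Ω / (8 * C ^ 2))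
  refine ⟨Real.log (1 + r ^ 2 / (2 * C ^ 2)), Real.log_pos (by simp; positivity),
    fun D hD ⟨q, hq⟩ hdiam => ?_⟩
  have hw := lipschitzWith_logCutoff (q := q) hr hrR
  have hint := integrableOn_sq_div_sq hw.continuous hcomp hclH
  have hmass : 4 * (volume.real Ω / (8 * C ^ 2)) ≤ ∫ p in Ω, logCutoff q r R p ^ 2 / p.2 ^ 2 := by
    refine le_trans (le_of_eq ?_) (sub_div_sq_le_setIntegral_sq_div_sq hopen.measurableSet hvol
      (Real.sqrt_nonneg _) (fun p hp => hclH (subset_closure hp))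
      (fun p hp => hyC p (subset_closure hp))
      (fun p _ hp => logCutoff_of_le_dist hr hrR hp.le) hint)
    rw [Real.sq_sqrt (by positivity)]
    field_simp
    ring
  obtain ⟨hgrad_int, hgrad⟩ := hcut q
  refine ⟨logCutoff q r R, ⟨_, hw⟩, ⟨ball q r, isOpen_ball, fun b hb => ?_,
    fun p hp => logCutoff_of_dist_le (mem_ball.1 hp).le⟩, hint,
    lt_of_lt_of_le (by positivity) hmass, ?_⟩
  · have hqΩ := frontier_subset_closure (hD hq)
    have hbΩ := frontier_subset_closure (hD hb)
    rw [mem_ball, dist_comm]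
    exact dist_lt_of_hypDist_lt (hclH hqΩ) (hclH hbΩ) (hyC q hqΩ) (hyC b hbΩ) hr (hdiam q hq b hb)
  · have := setIntegral_le_integral (s := Ω) hgrad_int (ae_of_all _ (gradSq_nonneg _))
    linarith

/-- **Lemma (small Dirichlet region forces small first mixed eigenvalue).** For every
nonempty bounded open `Ω ⊆ ℍ²` there is `ε₀ > 0` such that for every nonempty `D ⊆ ∂Ω`
of hyperbolic diameter less than `ε₀` there is a Lipschitz test function `w` vanishing
on an open neighborhood of `D` with `0 < ∫_Ω w² dA < ∞` and
`∫_Ω |∇w|² dx dy < (1/4) ∫_Ω w² dA`; i.e. the first mixed eigenvalue is `< 1/4`. -/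
theorem first_mixed_eigenvalue_small
    (Ω : Set (ℝ × ℝ)) (hΩH : Ω ⊆ H2) (hne : Ω.Nonempty) (hopen : IsOpen Ω)
    (hcomp : IsCompact (closure Ω)) (hclH : closure Ω ⊆ H2) :
    ∃ ε₀ : ℝ, 0 < ε₀ ∧
      ∀ D : Set (ℝ × ℝ), D ⊆ frontier Ω → D.Nonempty →
        (∀ a ∈ D, ∀ b ∈ D, hypDist a b < ε₀) →
        ∃ w : ℝ × ℝ → ℝ, (∃ K : NNReal, LipschitzWith K w) ∧
          (∃ V : Set (ℝ × ℝ), IsOpen V ∧ D ⊆ V ∧ ∀ x ∈ V, w x = 0) ∧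
          IntegrableOn (fun p : ℝ × ℝ => w p ^ 2 / p.2 ^ 2) Ω volume ∧
          0 < (∫ p in Ω, w p ^ 2 / p.2 ^ 2) ∧
          (∫ p in Ω, gradSq w p) < (1 / 4) * ∫ p in Ω, w p ^ 2 / p.2 ^ 2 :=
  first_mixed_eigenvalue_small_general Ω hne hopen hcomp hclH
end
end
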